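/- Let (X, π) be a compact Hausdorff pretopological space, f : (X, π) → Y a strongly irreducible surjection with cover-compact fibers, and σ the θ-quotient pretopology on Y. Then f : (X, π) → (Y, rσ) is continuous and (Y, σ) is PHC (i.e., (Y, rσ) is compact). -/

import Mathlib

open Set Filter

/-- A pretopological space: a vicinity filter at each point containing the point. -/
structure Pretop (X : Type*) where
  V : X → Filter X
  pure_le : ∀ x : X, (pure x : Filter X) ≤ V x

/-- Two filters meet (`F # G`). -/
def Meets {X : Type*} (F G : Filter X) : Prop :=
  ∀ A ∈ F, ∀ B ∈ G, (A ∩ B).Nonempty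

namespace Pretop

variable {X Y : Type*} (π : Pretop X)

/-- Convergence: `F → x` iff `F ⊇ V x`. -/
def Conv (F : Filter X) (x : X) : Prop := F ≤ π.V x

/-- Adherence of a filter. -/
def adh (F : Filter X) : Set X := {x | Meets (π.V x) F}

/-- Adherence of a set (adherence of its principal filter). -/
def adhS (A : Set X) : Set X := {x | ∀ U ∈ π.V x, (U ∩ A).Nonempty}

/-- Inherence of a set. -/
def inh (A : Set X) : Set X := (π.adhS Aᶜ)ᶜ

/-- A compact pretopological space: every proper filter has nonempty adherence. -/
def IsCompactPre : Prop := ∀ F : Filter X, F.NeBot → (π.adh F).Nonempty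

/-- Hausdorff: distinct points have disjoint vicinities. -/
def HausdorffPre : Prop :=
  ∀ x y : X, x ≠ y → ∃ U ∈ π.V x, ∃ W ∈ π.V y, U ∩ W = ∅

/-- `F` is compact at `A`: every filter meeting `F` has adherence meeting `A`. -/
def CompactAt (F : Filter X) (A : Set X) : Prop :=
  ∀ G : Filter X, Meets G F → (π.adh G ∩ A).Nonempty

/-- A cover of `A`: every point of `A` has a member of `C` as a vicinity. -/
def IsCover (C : Set (Set X)) (A : Set X) : Prop :=
  ∀ x ∈ A, ∃ U ∈ C, U ∈ π.V x

/-- Cover-compactness. -/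
def CoverCompact (A : Set X) : Prop :=
  ∀ C : Set (Set X), π.IsCover C A →
    ∃ D : Finset (Set X), ↑D ⊆ C ∧ A ⊆ π.inh (⋃ U ∈ D, U)

lemma mem_of_vicinity {x : X} {U : Set X} (h : U ∈ π.V x) : x ∈ U := π.pure_le x h

lemma subset_adhS (A : Set X) : A ⊆ π.adhS A :=
  fun x hx U hU => ⟨x, π.mem_of_vicinity hU, hx⟩

lemma adhS_mono {A B : Set X} (h : A ⊆ B) : π.adhS A ⊆ π.adhS B :=
  fun x hx U hU => (hx U hU).imp fun y hy => ⟨hy.1, h hy.2⟩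

lemma adhS_empty : π.adhS (∅ : Set X) = ∅ := by
  ext x
  simp only [adhS, mem_setOf_eq, Set.inter_empty, Set.mem_empty_iff_false, iff_false]
  intro h
  simpa using h univ univ_mem

lemma adhS_union (A B : Set X) : π.adhS (A ∪ B) = π.adhS A ∪ π.adhS B := by
  apply Subset.antisymm
  · intro x hx
    by_contra hc
    simp only [Set.mem_union, not_or] at hc
    obtain ⟨h1, h2⟩ := hc
    simp only [adhS, mem_setOf_eq, not_forall] at h1 h2
    obtain ⟨U, hU, hUA⟩ := h1
    obtain ⟨W, hW, hWB⟩ := h2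
    obtain ⟨z, hz⟩ := hx (U ∩ W) (inter_mem hU hW)
    rcases hz.2 with hA | hB
    · exact hUA ⟨z, hz.1.1, hA⟩
    · exact hWB ⟨z, hz.1.2, hB⟩
  · exact Set.union_subset (π.adhS_mono Set.subset_union_left)
      (π.adhS_mono Set.subset_union_right)

lemma inh_mono {A B : Set X} (h : A ⊆ B) : π.inh A ⊆ π.inh B :=
  Set.compl_subset_compl.mpr (π.adhS_mono (Set.compl_subset_compl.mpr h))

lemma inh_inter (A B : Set X) : π.inh (A ∩ B) = π.inh A ∩ π.inh B := by
  simp only [inh, Set.compl_inter, adhS_union, Set.compl_union]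

lemma inh_univ : π.inh (univ : Set X) = univ := by
  simp [inh, adhS_empty]

lemma inh_subset (A : Set X) : π.inh A ⊆ A := by
  intro x hx
  by_contra hxA
  exact hx (π.subset_adhS Aᶜ hxA)

/-- The filter `F¹` of members of `F` whose inherence also belongs to `F`. -/
def F1 (F : Filter X) : Filter X where
  sets := {A | A ∈ F ∧ π.inh A ∈ F}
  univ_sets := ⟨univ_mem, by rw [π.inh_univ]; exact univ_mem⟩
  sets_of_superset := fun hA hAB =>
    ⟨mem_of_superset hA.1 hAB, mem_of_superset hA.2 (π.inh_mono hAB)⟩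
  inter_sets := fun hA hB =>
    ⟨inter_mem hA.1 hB.1, by rw [π.inh_inter]; exact inter_mem hA.2 hB.2⟩

lemma mem_F1 {F : Filter X} {A : Set X} : A ∈ π.F1 F ↔ A ∈ F ∧ π.inh A ∈ F := Iff.rfl

/-- The partial regularization `rπ`: vicinities generated by adherences of vicinities. -/
def rpre : Pretop X where
  V x := (π.V x).lift' π.adhS
  pure_le x := le_lift'.mpr fun U hU =>
    mem_pure.mpr (π.subset_adhS U (π.mem_of_vicinity hU))

lemma mem_rpre {x : X} {A : Set X} :
    A ∈ (π.rpre).V x ↔ ∃ U ∈ π.V x, π.adhS U ⊆ A :=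
  mem_lift'_sets fun _ _ h => π.adhS_mono h

end Pretop

/-- Continuity of maps between pretopological spaces. -/
def ContPre {X Y : Type*} (π : Pretop X) (τ : Pretop Y) (f : X → Y) : Prop :=
  ∀ x : X, ∀ W ∈ τ.V (f x), ∃ U ∈ π.V x, f '' U ⊆ W

/-- Perfect maps between pretopological spaces. -/
def PerfectPre {X Y : Type*} (π : Pretop X) (τ : Pretop Y) (f : X → Y) : Prop :=
  ∀ (F : Filter Y) (y : Y), τ.Conv F y → π.CompactAt (F.comap f) (f ⁻¹' {y})

/-- The filter of vicinities of a set `A`. -/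
def VSet {X : Type*} (π : Pretop X) (A : Set X) : Filter X where
  sets := {V | A ⊆ π.inh V}
  univ_sets := by simp [π.inh_univ]
  sets_of_superset := fun h hsub => h.trans (π.inh_mono hsub)
  inter_sets := fun h1 h2 => by
    rw [Set.mem_setOf_eq, π.inh_inter]; exact Set.subset_inter h1 h2

lemma mem_VSet {X : Type*} {π : Pretop X} {A V : Set X} :
    V ∈ VSet π A ↔ A ⊆ π.inh V := Iff.rfl

/-- `f^#[A] = {y : f⁻¹(y) ⊆ A}`. -/
def fsharp {X Y : Type*} (f : X → Y) (A : Set X) : Set Y := {y | f ⁻¹' {y} ⊆ A}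

/-- The θ-quotient pretopology on `Y`. -/
def thetaQuot {X Y : Type*} (π : Pretop X) (f : X → Y) : Pretop Y where
  V y := (VSet π (f ⁻¹' {y})).lift' (fsharp f)
  pure_le y := le_lift'.mpr fun V hV =>
    mem_pure.mpr (fun x hx => π.inh_subset V ((mem_VSet.mp hV) hx))

/-- Strong irreducibility. -/
def StronglyIrreducible {X Y : Type*} (π : Pretop X) (f : X → Y) : Prop :=
  ∀ U V : Set X, (π.inh U).Nonempty → (π.inh V).Nonempty → (U ∩ V).Nonempty →
    ∃ y : Y, f ⁻¹' {y} ⊆ U ∩ V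

/-- The simple extension `Y⁺` determined by a dense subset `S`. -/
def extPlus {X : Type*} (ρ : Pretop X) (S : Set X) : Pretop X where
  V p := (ρ.V p).lift' (fun W => insert p (W ∩ S))
  pure_le p := le_lift'.mpr fun W _ => mem_pure.mpr (Set.mem_insert p _)

/-- `o(A) = {p : ∃ W ∈ V(p), W ∩ S = A}`. -/
def oSet {X : Type*} (ρ : Pretop X) (S : Set X) (A : Set X) : Set X :=
  {p | ∃ W ∈ ρ.V p, W ∩ S = A}

/-- The strict extension `Y^#` determined by a dense subset `S`. -/
def extSharp {X : Type*} (ρ : Pretop X) (S : Set X) : Pretop X where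
  V p := (ρ.V p).lift' (fun W => oSet ρ S (W ∩ S))
  pure_le p := le_lift'.mpr fun W hW => mem_pure.mpr ⟨W, hW, rfl⟩

/-- The θ-pretopology of a topological space: vicinities are closed neighborhoods. -/
def theta (X : Type*) [TopologicalSpace X] : Pretop X where
  V x := (nhds x).lift' closure
  pure_le x := le_lift'.mpr fun U hU =>
    mem_pure.mpr (subset_closure (mem_of_mem_nhds hU))

/-! Strong irreducibility puts the whole image `f '' V` of a set with nonempty inherence into
the σ-adherence of `f^#[V]`: any σ-vicinity `f^#[V']` of a point `f z` with `z ∈ V` comes from a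
set `V'` whose inherence contains `z`, so `V ∩ V'` contains a whole fibre. Hence `rσ`-vicinities
of `f x` pull back to π-vicinities of `x`, i.e. `f` is continuous into `rσ`, and compactness
passes to the continuous surjective image. Hausdorffness of σ comes from separating the disjoint
cover-compact fibres by disjoint sets `U`, `W`; surjectivity makes `f^#[U]` and `f^#[W]`
disjoint. -/

namespace Pretop

variable {X Y : Type*} {π : Pretop X}

lemma mem_inh_iff {x : X} {V : Set X} : x ∈ π.inh V ↔ V ∈ π.V x := by
  refine ⟨fun hx => ?_, fun hV hx => ?_⟩
  · simp only [inh, adhS, mem_compl_iff, mem_ofPred_eq, not_forall, not_nonempty_iff_eq_empty,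
      ← disjoint_iff_inter_eq_empty, exists_prop] at hx
    obtain ⟨U, hU, hdisj⟩ := hx
    exact mem_of_superset hU fun a ha => by_contra fun haV => hdisj.ne_of_mem ha haV rfl
  · obtain ⟨a, haV, haVc⟩ := hx V hV
    exact haVc haV

lemma IsCompactPre.of_contPre_surjective {τ : Pretop Y} {f : X → Y} (hc : π.IsCompactPre)
    (hf : ContPre π τ f) (hs : Function.Surjective f) : τ.IsCompactPre := by
  intro G hG
  have : (G.comap f).NeBot := comap_neBot fun t ht => (G.nonempty_of_mem ht).preimage hs
  obtain ⟨x, hx⟩ := hc (G.comap f) this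
  refine ⟨f x, fun A hA B hB => ?_⟩
  obtain ⟨U, hU, hUA⟩ := hf x A hA
  obtain ⟨z, hzU, hzB⟩ := hx U hU (f ⁻¹' B) (preimage_mem_comap hB)
  exact ⟨f z, hUA (mem_image_of_mem f hzU), hzB⟩

/-- Both separation steps (point from set, set from set) are instances of this, with `𝓕` the
vicinity filter of a point or of a set. -/
lemma CoverCompact.exists_disjoint {A : Set X} (hA : π.CoverCompact A) {𝓕 : Filter X}
    (h : ∀ x ∈ A, ∃ U ∈ π.V x, ∃ W ∈ 𝓕, Disjoint U W) :
    ∃ U ∈ VSet π A, ∃ W ∈ 𝓕, Disjoint U W := by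
  obtain ⟨D, hDC, hAD⟩ := hA {U | ∃ W ∈ 𝓕, Disjoint U W} fun x hx => by
    obtain ⟨U, hU, W, hW, hUW⟩ := h x hx
    exact ⟨U, ⟨W, hW, hUW⟩, hU⟩
  choose! w hw𝓕 hwU using fun U (hU : U ∈ (D : Set (Set X))) => hDC hU
  refine ⟨⋃ U ∈ D, U, hAD, ⋂ U ∈ D, w U, (biInter_finset_mem D).mpr hw𝓕, ?_⟩
  simp only [disjoint_iUnion₂_left]
  exact fun U hU => (hwU U hU).mono_right (biInter_subset_of_mem hU)

lemma HausdorffPre.exists_disjoint_of_coverCompact (hH : π.HausdorffPre) {A B : Set X}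
    (hA : π.CoverCompact A) (hB : π.CoverCompact B) (hAB : Disjoint A B) :
    ∃ U ∈ VSet π A, ∃ W ∈ VSet π B, Disjoint U W := by
  refine hA.exists_disjoint fun x hx => ?_
  obtain ⟨W, hW, U, hU, hWU⟩ := hB.exists_disjoint (𝓕 := π.V x) fun z hz => by
    obtain ⟨W, hW, U, hU, hWU⟩ := hH z x (hAB.ne_of_mem hx hz).symm
    exact ⟨W, hW, U, hU, disjoint_iff_inter_eq_empty.mpr hWU⟩
  exact ⟨U, hU, W, hW, hWU.symm⟩

end Pretop

section ThetaQuot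

variable {X Y : Type*} {π : Pretop X} {f : X → Y}

lemma fsharp_mono : Monotone (fsharp f) :=
  fun _ _ h _ hy => hy.trans h

lemma Disjoint.fsharp (hs : Function.Surjective f) {U W : Set X} (h : Disjoint U W) :
    Disjoint (fsharp f U) (fsharp f W) := by
  refine Set.disjoint_left.mpr fun y hyU hyW => ?_
  obtain ⟨x, rfl⟩ := hs y
  exact h.ne_of_mem (hyU rfl) (hyW rfl) rfl

lemma mem_thetaQuot_V {y : Y} {W : Set Y} :
    W ∈ (thetaQuot π f).V y ↔ ∃ V ∈ VSet π (f ⁻¹' {y}), fsharp f V ⊆ W :=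
  mem_lift'_sets fsharp_mono

lemma fsharp_mem_thetaQuot_V {y : Y} {V : Set X} (hV : V ∈ VSet π (f ⁻¹' {y})) :
    fsharp f V ∈ (thetaQuot π f).V y :=
  mem_lift' hV

lemma StronglyIrreducible.image_subset_adhS_fsharp (hirr : StronglyIrreducible π f)
    {V : Set X} (hV : (π.inh V).Nonempty) :
    f '' V ⊆ (thetaQuot π f).adhS (fsharp f V) := by
  rintro _ ⟨z, hz, rfl⟩ W hW
  obtain ⟨V', hV', hV'W⟩ := mem_thetaQuot_V.mp hW
  have hzV' : z ∈ π.inh V' := mem_VSet.mp hV' rfl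
  obtain ⟨y, hy⟩ := hirr V V' hV ⟨z, hzV'⟩ ⟨z, hz, π.inh_subset V' hzV'⟩
  exact ⟨y, hV'W fun a ha => (hy ha).2, fun a ha => (hy ha).1⟩

lemma StronglyIrreducible.contPre_rpre_thetaQuot (hirr : StronglyIrreducible π f) :
    ContPre π (thetaQuot π f).rpre f := by
  intro x A hA
  obtain ⟨W, hW, hWA⟩ := (Pretop.mem_rpre _).mp hA
  obtain ⟨V, hV, hVW⟩ := mem_thetaQuot_V.mp hW
  have hxV : x ∈ π.inh V := mem_VSet.mp hV rfl
  exact ⟨V, Pretop.mem_inh_iff.mp hxV,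
    (hirr.image_subset_adhS_fsharp ⟨x, hxV⟩).trans (((thetaQuot π f).adhS_mono hVW).trans hWA)⟩

lemma thetaQuot_hausdorffPre (hH : π.HausdorffPre) (hs : Function.Surjective f)
    (hfib : ∀ y : Y, π.CoverCompact (f ⁻¹' {y})) : (thetaQuot π f).HausdorffPre := by
  intro y₁ y₂ hne
  obtain ⟨U, hU, W, hW, hUW⟩ := hH.exists_disjoint_of_coverCompact (hfib y₁) (hfib y₂)
    ((Set.disjoint_singleton.mpr hne).preimage f)
  exact ⟨_, fsharp_mem_thetaQuot_V hU, _, fsharp_mem_thetaQuot_V hW,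
    disjoint_iff_inter_eq_empty.mp (hUW.fsharp hs)⟩

end ThetaQuot

/-- If `(X, π)` is compact Hausdorff and `f` is a strongly irreducible surjection with
cover-compact fibers, then `f : (X, π) → (Y, σ)` is w-θ-continuous (continuous into
`rσ`) and `(Y, σ)` is PHC. -/
theorem thetaQuot_phc {X Y : Type*} (π : Pretop X) (f : X → Y)
    (hc : π.IsCompactPre) (hH : π.HausdorffPre) (hs : Function.Surjective f)
    (hirr : StronglyIrreducible π f)
    (hfib : ∀ y : Y, π.CoverCompact (f ⁻¹' {y})) :
    ContPre π ((thetaQuot π f).rpre) f ∧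
    (thetaQuot π f).HausdorffPre ∧
    ((thetaQuot π f).rpre).IsCompactPre :=
  ⟨hirr.contPre_rpre_thetaQuot, thetaQuot_hausdorffPre hH hs hfib,
    hc.of_contPre_surjective hirr.contPre_rpre_thetaQuot hs⟩
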